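/- arXiv:2308.06563 — 7 statements merged into one kernel-verified Lean document; each statement's English description precedes it below -/
import Mathlib

section
/- Let r > 0 and b_1, ..., b_s be integers with gcd(r, b_1, ..., b̂_i, ..., b_s) = 1 for all i. Suppose there is a subset I ⊆ {1,...,s} such that r divides ∑_{k∈I} b_k, gcd({b_k : k ∈ I} ∪ {r}) = 1, and gcd(b_i, r) = 1 for some i ∉ I. Then for every integer t with 1 ≤ t ≤ r - 1, we have ∑_{k=1}^s (t·b_k mod r) > r, where (a mod r) denotes the representative in {0, ..., r-1}. -/
def sylvester : ℕ → ℕ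
  | 0 => 2
  | n + 1 => sylvester n * (sylvester n - 1) + 1

/-!
Fix `1 ≤ t ≤ r - 1`, so `r ∤ t`. The residues `(t * b k) % r` are nonnegative. Over `I` they sum
to a multiple of `r`, since `r ∣ ∑_{k ∈ I} b k`; this multiple is nonzero, for otherwise `r`
divides every `t * b k` with `k ∈ I`, hence `t * gcd_I b`, hence `t`. So the residues over `I`
already sum to at least `r`, and the residue at the index `i ∉ I` is positive because `b i` is
a unit mod `r`.
-/

theorem Int.dvd_sum_emod_of_dvd_sum {ι : Type*} {s : Finset ι} {f : ι → ℤ} {r : ℤ}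
    (h : r ∣ ∑ k ∈ s, f k) : r ∣ ∑ k ∈ s, f k % r := by
  rw [Int.dvd_iff_emod_eq_zero, ← Finset.sum_int_mod]
  exact Int.emod_eq_zero_of_dvd h

theorem Int.dvd_of_forall_dvd_mul_of_gcd_eq_one {ι : Type*} {s : Finset ι} {b : ι → ℤ}
    {r t : ℤ} (hco : Int.gcd r (s.gcd b) = 1) (h : ∀ k ∈ s, r ∣ t * b k) : r ∣ t := by
  have hdvd : r ∣ t * s.gcd b :=
    (Finset.gcd_mul_left' s b t).dvd_iff_dvd_right.mp (Finset.dvd_gcd h)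
  exact (Int.isCoprime_iff_gcd_eq_one.mpr hco).dvd_of_dvd_mul_right hdvd

theorem Int.le_sum_emod_mul {ι : Type*} {s : Finset ι} {b : ι → ℤ} {r t : ℤ} (hr : r ≠ 0)
    (hsum : r ∣ ∑ k ∈ s, b k) (hco : Int.gcd r (s.gcd b) = 1) (ht : ¬ r ∣ t) :
    r ≤ ∑ k ∈ s, t * b k % r := by
  have hnonneg : ∀ k ∈ s, 0 ≤ t * b k % r := fun k _ => Int.emod_nonneg _ hr
  have hne : ∑ k ∈ s, t * b k % r ≠ 0 := by
    intro h0
    refine ht (Int.dvd_of_forall_dvd_mul_of_gcd_eq_one hco fun k hk => ?_)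
    exact Int.dvd_of_emod_eq_zero ((Finset.sum_eq_zero_iff_of_nonneg hnonneg).mp h0 k hk)
  refine Int.le_of_dvd ((Finset.sum_nonneg hnonneg).lt_of_ne' hne) ?_
  have hsum_t : r ∣ ∑ k ∈ s, t * b k := by simpa only [Finset.mul_sum] using hsum.mul_left t
  exact Int.dvd_sum_emod_of_dvd_sum hsum_t

theorem reid_tai_terminal_trick_general (m : ℕ) (r : ℤ) (hr : 0 < r) (b : Fin m → ℤ)
    (I : Finset (Fin m))
    (hsum : r ∣ ∑ k ∈ I, b k)
    (hgcdI : Int.gcd r (Finset.gcd I b) = 1)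
    (hi : ∃ i : Fin m, i ∉ I ∧ Int.gcd (b i) r = 1) :
    ∀ t : ℤ, 1 ≤ t → t ≤ r - 1 → (∑ k : Fin m, (t * b k) % r) > r := by
  obtain ⟨i, hiI, hbi⟩ := hi
  intro t ht1 ht2
  have hrt : ¬ r ∣ t := fun h => by have := Int.le_of_dvd (by omega) h; omega
  have hI : r ≤ ∑ k ∈ I, t * b k % r := Int.le_sum_emod_mul hr.ne' hsum hgcdI hrt
  have hres_i : 0 < t * b i % r := (Int.emod_pos_of_not_dvd fun h =>
    hrt ((Int.isCoprime_iff_gcd_eq_one.mpr hbi).symm.dvd_of_dvd_mul_right h)).resolve_left hr.ne'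
  calc r < t * b i % r + ∑ k ∈ I, t * b k % r := by omega
    _ = ∑ k ∈ insert i I, t * b k % r :=
      (Finset.sum_insert (f := fun k => t * b k % r) hiI).symm
    _ ≤ ∑ k : Fin m, t * b k % r :=
      Finset.sum_le_sum_of_subset_of_nonneg (Finset.subset_univ _)
        fun k _ _ => Int.emod_nonneg _ hr.ne'

theorem reid_tai_terminal_trick (m : ℕ) (r : ℤ) (hr : 0 < r) (b : Fin m → ℤ)
    (hwf : ∀ i : Fin m, Int.gcd r (Finset.gcd (Finset.univ.erase i) b) = 1)
    (I : Finset (Fin m))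
    (hsum : r ∣ ∑ k ∈ I, b k)
    (hgcdI : Int.gcd r (Finset.gcd I b) = 1)
    (hi : ∃ i : Fin m, i ∉ I ∧ Int.gcd (b i) r = 1) :
    ∀ t : ℤ, 1 ≤ t → t ≤ r - 1 → (∑ k : Fin m, (t * b k) % r) > r :=
  reid_tai_terminal_trick_general m r hr b I hsum hgcdI hi
end

section
/- For n ≥ 2, let h = (s_{n-1} - 1)(2s_{n-1} - 3), a_i = h/s_{n-i} for 2 ≤ i ≤ n, a_1 = s_{n-1} - 1, and a_0 = s_{n-1} - 2, where s_k is the Sylvester sequence. Then a_0 + a_1 + ... + a_n = h. -/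
open Finset

namespace Sylvester

theorem two_le (m : ℕ) : 2 ≤ sylvester m := by
  induction m with
  | zero => exact le_rfl
  | succ k ih =>
    have : 1 ≤ sylvester k - 1 := by omega
    have := Nat.mul_le_mul ih this
    simp only [sylvester]
    omega

theorem succ_sub_one (m : ℕ) :
    sylvester (m + 1) - 1 = sylvester m * (sylvester m - 1) := by
  simp [sylvester]

theorem sub_one_eq_prod (m : ℕ) : sylvester m - 1 = ∏ j ∈ range m, sylvester j := by
  induction m with
  | zero => rfl
  | succ k ih => rw [succ_sub_one, prod_range_succ, ih, mul_comm]

theorem dvd_sub_one {j m : ℕ} (h : j < m) : sylvester j ∣ sylvester m - 1 :=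
  sub_one_eq_prod m ▸ dvd_prod_of_mem _ (mem_range.mpr h)

theorem sum_sub_one_div (m : ℕ) :
    ∑ j ∈ range m, (sylvester m - 1) / sylvester j = sylvester m - 2 := by
  induction m with
  | zero => rfl
  | succ k ih =>
    have hk := two_le k
    have hlower : ∀ j ∈ range k,
        (sylvester (k + 1) - 1) / sylvester j = sylvester k * ((sylvester k - 1) / sylvester j) :=
      fun j hj => by rw [succ_sub_one, Nat.mul_div_assoc _ (dvd_sub_one (mem_range.mp hj))]
    rw [sum_range_succ, sum_congr rfl hlower, ← mul_sum, ih, succ_sub_one,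
      Nat.mul_div_cancel_left _ (by omega)]
    obtain ⟨t, ht⟩ : ∃ t, sylvester k = t + 2 := ⟨sylvester k - 2, by omega⟩
    simp only [sylvester, ht, Nat.add_sub_cancel, show t + 2 - 1 = t + 1 by omega]
    ring_nf
    omega

end Sylvester

theorem canonical_weights_sum_general (n : ℕ) :
    (sylvester (n - 1) - 2) + (sylvester (n - 1) - 1)
      + ∑ i ∈ Finset.Icc 2 n,
          (sylvester (n - 1) - 1) * (2 * sylvester (n - 1) - 3) / sylvester (n - i)
      = (sylvester (n - 1) - 1) * (2 * sylvester (n - 1) - 3) := by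
  set s := sylvester (n - 1) with hs
  have hreindex : ∑ i ∈ Icc 2 n, (s - 1) * (2 * s - 3) / sylvester (n - i)
      = ∑ j ∈ range (n - 1), (s - 1) * (2 * s - 3) / sylvester j := by
    rw [← Ico_add_one_right_eq_Icc,
      sum_Ico_reflect (fun j ↦ (s - 1) * (2 * s - 3) / sylvester j) 2 le_rfl, Nat.sub_self,
      Nat.Ico_zero_eq_range]
    rfl
  have hfactor : ∀ j ∈ range (n - 1),
      (s - 1) * (2 * s - 3) / sylvester j = (2 * s - 3) * ((s - 1) / sylvester j) :=
    fun j hj => by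
      rw [mul_comm, Nat.mul_div_assoc _ (Sylvester.dvd_sub_one (mem_range.mp hj))]
  rw [hreindex, sum_congr rfl hfactor, ← mul_sum, hs, Sylvester.sum_sub_one_div, ← hs]
  obtain ⟨t, ht⟩ : ∃ t, s = t + 2 := ⟨s - 2, by have := Sylvester.two_le (n - 1); omega⟩
  rw [ht, Nat.add_sub_cancel, show t + 2 - 1 = t + 1 by omega,
    show 2 * (t + 2) - 3 = 2 * t + 1 by omega]
  ring

theorem canonical_weights_sum (n : ℕ) (hn : 2 ≤ n) :
    (sylvester (n - 1) - 2) + (sylvester (n - 1) - 1)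
      + ∑ i ∈ Finset.Icc 2 n,
          (sylvester (n - 1) - 1) * (2 * sylvester (n - 1) - 3) / sylvester (n - i)
      = (sylvester (n - 1) - 1) * (2 * sylvester (n - 1) - 3) :=
  canonical_weights_sum_general n
end

section
/- For n ≥ 2, with h = (s_{n-1}-1)(2s_{n-1}-3), a_i = h/s_{n-i} for 2 ≤ i ≤ n, a_1 = s_{n-1}-1, a_0 = s_{n-1}-2, the weights are well-formed: for every index j, gcd of the remaining n weights {a_i : i ≠ j} equals 1. -/
/-!
With `m = n - 1`, Euclid's identity `∏_{k<m} s_k = s_m - 1` turns `a_{n-k}` (`k < m`) into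
`(∏_{j<m, j≠k} s_j) * (2 s_m - 3)`. Omitting `a_j` with `j ≥ 2` keeps the consecutive weights
`a_0 = s_m - 2` and `a_1 = s_m - 1`. Omitting `a_0` or `a_1` keeps the other one, which is coprime to
`2 s_m - 3`; so a common divisor divides every cofactor `∏_{j≠k} s_j`, and these have gcd `1` because
the Sylvester numbers are pairwise coprime.
-/

open Function

theorem Nat.eq_one_of_forall_dvd_prod_erase {ι : Type*} [DecidableEq ι] {s : Finset ι}
    {f : ι → ℕ} (hs : s.Nonempty) (hf : (s : Set ι).Pairwise (Nat.Coprime on f)) {d : ℕ}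
    (hd : ∀ i ∈ s, d ∣ ∏ j ∈ s.erase i, f j) : d = 1 := by
  have hcop : ∀ i ∈ s, d.Coprime (f i) := fun i hi =>
    Nat.Coprime.coprime_dvd_left (hd i hi) <| Nat.Coprime.prod_left fun j hj =>
      hf (Finset.mem_of_mem_erase hj) hi (Finset.ne_of_mem_erase hj)
  obtain ⟨i, hi⟩ := hs
  have hdvd : d ∣ ∏ j ∈ s, f j := (hd i hi).trans (Finset.prod_dvd_prod_of_subset _ _ _
    (Finset.erase_subset i s))
  exact Nat.Coprime.eq_one_of_dvd (Nat.Coprime.prod_right hcop) hdvd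

theorem Nat.coprime_two_mul_add_one (t : ℕ) : t.Coprime (2 * t + 1) :=
  (Nat.coprime_mul_right_add_right t 1 2).mpr (Nat.coprime_one_right t)

theorem Nat.coprime_add_one_two_mul_add_one (t : ℕ) : (t + 1).Coprime (2 * t + 1) := by
  rw [two_mul, add_assoc, Nat.coprime_add_self_right, Nat.coprime_self_add_left]
  exact Nat.coprime_one_left t

namespace sylvester

theorem two_le (k : ℕ) : 2 ≤ sylvester k := by
  induction k with
  | zero => rfl
  | succ k ih =>
    have := Nat.mul_le_mul ih (show 1 ≤ sylvester k - 1 by omega)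
    simp only [sylvester]
    omega

theorem succ_sub_one (k : ℕ) : sylvester (k + 1) - 1 = sylvester k * (sylvester k - 1) := rfl

theorem prod_range (m : ℕ) : ∏ k ∈ Finset.range m, sylvester k = sylvester m - 1 := by
  induction m with
  | zero => rfl
  | succ m ih => rw [Finset.prod_range_succ, ih, succ_sub_one, mul_comm]

theorem dvd_sub_one {k m : ℕ} (h : k < m) : sylvester k ∣ sylvester m - 1 :=
  prod_range m ▸ Finset.dvd_prod_of_mem _ (Finset.mem_range.mpr h)

theorem coprime_of_lt {k m : ℕ} (h : k < m) : (sylvester k).Coprime (sylvester m) := by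
  obtain ⟨c, hc⟩ := dvd_sub_one h
  have := two_le m
  rw [show sylvester m = 1 + sylvester k * c by omega, Nat.coprime_add_mul_left_right]
  exact Nat.coprime_one_right _

theorem pairwise_coprime : Pairwise (Nat.Coprime on sylvester) := fun _ _ h =>
  h.lt_or_gt.elim coprime_of_lt fun h => (coprime_of_lt h).symm

theorem sub_one_mul_div {k m : ℕ} (h : k < m) (c : ℕ) :
    (sylvester m - 1) * c / sylvester k = (∏ j ∈ (Finset.range m).erase k, sylvester j) * c := by
  rw [← prod_range, ← Finset.mul_prod_erase _ _ (Finset.mem_range.mpr h), mul_assoc,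
    Nat.mul_div_cancel_left _ (by linarith [two_le k])]

end sylvester

theorem canonical_weights_well_formed (n : ℕ) (hn : 2 ≤ n)
    (a : ℕ → ℕ)
    (ha0 : a 0 = sylvester (n - 1) - 2)
    (ha1 : a 1 = sylvester (n - 1) - 1)
    (hai : ∀ i, 2 ≤ i → i ≤ n →
      a i = (sylvester (n - 1) - 1) * (2 * sylvester (n - 1) - 3) / sylvester (n - i)) :
    ∀ j ≤ n, Finset.gcd ((Finset.range (n + 1)).erase j) a = 1 := by
  intro j hj
  obtain ⟨t, ht⟩ : ∃ t, sylvester (n - 1) = t + 2 :=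
    ⟨_, (Nat.sub_add_cancel (sylvester.two_le _)).symm⟩
  rw [ht, show t + 2 - 2 = t by omega] at ha0
  rw [ht, show t + 2 - 1 = t + 1 by omega] at ha1
  simp only [show 2 * sylvester (n - 1) - 3 = 2 * t + 1 by omega] at hai
  have hdvd : ∀ i ≤ n, i ≠ j → Finset.gcd ((Finset.range (n + 1)).erase j) a ∣ a i :=
    fun i hi hij => Finset.gcd_dvd (Finset.mem_erase.mpr ⟨hij, Finset.mem_range.mpr (by omega)⟩)
  generalize Finset.gcd ((Finset.range (n + 1)).erase j) a = d at hdvd ⊢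
  by_cases hj1 : 2 ≤ j
  · exact Nat.eq_one_of_dvd_coprimes (Nat.coprime_self_add_right.mpr (Nat.coprime_one_right t))
      (ha0 ▸ hdvd 0 (by omega) (by omega)) (ha1 ▸ hdvd 1 (by omega) (by omega))
  have hcop : d.Coprime (2 * t + 1) := by
    interval_cases j
    · exact (Nat.coprime_add_one_two_mul_add_one t).coprime_dvd_left
        (ha1 ▸ hdvd 1 (by omega) (by omega))
    · exact (Nat.coprime_two_mul_add_one t).coprime_dvd_left (ha0 ▸ hdvd 0 (by omega) (by omega))
  refine Nat.eq_one_of_forall_dvd_prod_erase (s := Finset.range (n - 1)) (f := sylvester)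
    ⟨0, Finset.mem_range.mpr (by omega)⟩ (sylvester.pairwise_coprime.set_pairwise _)
    fun k hk => hcop.dvd_of_dvd_mul_right ?_
  have hk : k < n - 1 := Finset.mem_range.mp hk
  rw [← sylvester.sub_one_mul_div hk, ← show n - (n - k) = k by omega, ← hai _ (by omega) (by omega)]
  exact hdvd _ (by omega) (by omega)
end

section
/- For n ≥ 2, with h = (s_{n-1}-1)(2s_{n-1}-3), a_i = h/s_{n-i} for 2 ≤ i ≤ n, and a_0 = s_{n-1}-2, one has a_2 + a_3 + ... + a_n = (2s_{n-1} - 3) · a_0; i.e., the sum of the weights h/s_0, ..., h/s_{n-2} is a multiple of s_{n-1} - 2. -/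
open Finset

theorem two_le_sylvester (n : ℕ) : 2 ≤ sylvester n := by
  induction n with
  | zero => rfl
  | succ n ih =>
    show 2 ≤ sylvester n * (sylvester n - 1) + 1
    have := Nat.mul_le_mul ih (show 1 ≤ sylvester n - 1 by omega)
    omega

theorem sylvester_succ_sub_one (n : ℕ) :
    sylvester (n + 1) - 1 = sylvester n * (sylvester n - 1) :=
  Nat.add_sub_cancel _ _

theorem sylvester_succ_sub_two (n : ℕ) :
    sylvester (n + 1) - 2 = sylvester n * (sylvester n - 2) + (sylvester n - 1) := by
  have h := two_le_sylvester n
  have h' : 2 ≤ sylvester n * (sylvester n - 1) + 1 := two_le_sylvester (n + 1)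
  show sylvester n * (sylvester n - 1) + 1 - 2 = _
  zify [h, h', h.trans' one_le_two]
  ring

theorem sylvester_dvd_sub_one {k m : ℕ} (h : k < m) : sylvester k ∣ sylvester m - 1 := by
  induction m with
  | zero => omega
  | succ m ih =>
    rw [sylvester_succ_sub_one]
    rcases Nat.lt_succ_iff_lt_or_eq.mp h with hk | rfl
    · exact (ih hk).mul_left _
    · exact dvd_mul_right _ _

theorem sum_range_sylvester_sub_one_div (m : ℕ) :
    ∑ k ∈ range m, (sylvester m - 1) / sylvester k = sylvester m - 2 := by
  induction m with
  | zero => rfl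
  | succ m ih =>
    have hpos : 0 < sylvester m := (two_le_sylvester m).trans_lt' two_pos
    have hterm : ∀ k ∈ range m,
        (sylvester (m + 1) - 1) / sylvester k = sylvester m * ((sylvester m - 1) / sylvester k) :=
      fun k hk ↦ by
        rw [sylvester_succ_sub_one, Nat.mul_div_assoc _ (sylvester_dvd_sub_one (mem_range.mp hk))]
    rw [sum_range_succ, sum_congr rfl hterm, ← mul_sum, ih, sylvester_succ_sub_one,
      Nat.mul_div_cancel_left _ hpos, sylvester_succ_sub_two]

theorem canonical_weights_a0_multiple_general (n : ℕ) :
    ∑ i ∈ Finset.Icc 2 n,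
        (sylvester (n - 1) - 1) * (2 * sylvester (n - 1) - 3) / sylvester (n - i)
      = (2 * sylvester (n - 1) - 3) * (sylvester (n - 1) - 2) := by
  have hreindex := sum_Ico_reflect
    (fun k ↦ (sylvester (n - 1) - 1) * (2 * sylvester (n - 1) - 3) / sylvester k) 2
    (le_refl (n + 1))
  rw [Ico_add_one_right_eq_Icc, Nat.sub_self, show n + 1 - 2 = n - 1 by omega,
    Nat.Ico_zero_eq_range] at hreindex
  rw [hreindex, ← sum_range_sylvester_sub_one_div, mul_sum]
  refine sum_congr rfl fun k hk ↦ ?_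
  rw [mul_comm, Nat.mul_div_assoc _ (sylvester_dvd_sub_one (mem_range.mp hk))]

theorem canonical_weights_a0_multiple (n : ℕ) (hn : 2 ≤ n) :
    ∑ i ∈ Finset.Icc 2 n,
        (sylvester (n - 1) - 1) * (2 * sylvester (n - 1) - 3) / sylvester (n - i)
      = (2 * sylvester (n - 1) - 3) * (sylvester (n - 1) - 2) :=
  canonical_weights_a0_multiple_general n
end

section
/- For n ≥ 3 and the terminal construction weights, for each j with 2 ≤ j ≤ n-1, the sum a_n + a_{n-1} + ... + â_j + ... + a_2 + a_1 equals (s_{n-j} - 1) · a_j, a multiple of a_j coprime to a_0. -/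
/-!
Write `Q = ∏_{1 ≤ i < n-1} s_i`, so that `s_{n-1} = 2Q + 1` and the weights become
`a_0 = Q - 1`, `a_1 = Q`, `a_i = (2Q - 1) Q / s_{n-i}` and `a_n = (Q (2Q - 1) - 1) / 2`.
Sylvester's identity `∑_{1 ≤ m < n-1} 1 / s_m = (Q - 1) / (2Q)` shows that `Q` is odd and that
`a_n + a_1 + ∑_{i=2}^{n-1} a_i = Q (2Q - 1) = s_{n-j} a_j`. Coprimality holds because
`Q ≡ 2Q - 1 ≡ 1 (mod Q - 1)`.
-/

open Finset

theorem sylvester_pos (k : ℕ) : 0 < sylvester k := by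
  cases k <;> simp [sylvester]

theorem Finset.sum_prod_erase_insert {ι R : Type*} [DecidableEq ι] [CommSemiring R]
    (f : ι → R) {s : Finset ι} {a : ι} (ha : a ∉ s) :
    ∑ m ∈ insert a s, ∏ i ∈ (insert a s).erase m, f i
      = f a * ∑ m ∈ s, ∏ i ∈ s.erase m, f i + ∏ i ∈ s, f i := by
  have hs : ∀ m ∈ s, ∏ i ∈ (insert a s).erase m, f i = f a * ∏ i ∈ s.erase m, f i := by
    intro m hm
    rw [erase_insert_of_ne (ne_of_mem_of_not_mem hm ha).symm,
      prod_insert (fun h => ha (mem_of_mem_erase h))]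
  rw [sum_insert ha, erase_insert ha, sum_congr rfl hs, ← mul_sum, add_comm]

theorem sylvester_eq_two_mul_prod_add_one {N : ℕ} (hN : 1 ≤ N) :
    sylvester N = 2 * ∏ i ∈ Ico 1 N, sylvester i + 1 := by
  induction N, hN using Nat.le_induction with
  | base => rfl
  | succ N hN ih =>
    rw [Nat.Ico_succ_right_eq_insert_Ico hN, prod_insert (by simp), sylvester, ih,
      Nat.add_sub_cancel]
    ring

-- Sylvester's identity `∑_{1 ≤ m < N} 1 / s_m = 1/2 - 1 / (2 ∏_{1 ≤ i < N} s_i)`,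
-- cleared of denominators.
theorem two_mul_sum_prod_erase_sylvester_add_one {N : ℕ} (hN : 1 ≤ N) :
    2 * ∑ m ∈ Ico 1 N, ∏ i ∈ (Ico 1 N).erase m, sylvester i + 1
      = ∏ i ∈ Ico 1 N, sylvester i := by
  induction N, hN using Nat.le_induction with
  | base => rfl
  | succ N hN ih =>
    have hNs : N ∉ Ico 1 N := by simp
    rw [Nat.Ico_succ_right_eq_insert_Ico hN, sum_prod_erase_insert _ hNs, prod_insert hNs,
      sylvester_eq_two_mul_prod_add_one hN, ← ih]
    ring

theorem sum_Icc_two_sub_one_reflect {M : Type*} [AddCommMonoid M] (f : ℕ → M) {n : ℕ}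
    (hn : 1 ≤ n) : ∑ i ∈ Icc 2 (n - 1), f (n - i) = ∑ m ∈ Ico 1 (n - 1), f m := by
  rw [Icc_sub_one_right_eq_Ico_of_not_isMin (by simp; omega), sum_Ico_reflect _ _ n.le_succ,
    Nat.add_sub_cancel_left]
  rfl

theorem coprime_sub_one_mul_two_mul_sub_one {Q : ℕ} (hQ : 1 ≤ Q) :
    Nat.Coprime (Q - 1) (Q * (2 * Q - 1)) := by
  obtain ⟨k, rfl⟩ : ∃ k, Q = k + 1 := ⟨Q - 1, by omega⟩
  rw [Nat.add_sub_cancel, show 2 * (k + 1) - 1 = 2 * k + 1 by omega, Nat.coprime_mul_iff_right, Nat.coprime_mul_right_add_right]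
  simp

theorem sylvester_sub_one_mul_sub_two_eq {N m : ℕ} (hm : m ∈ Ico 1 N) :
    (sylvester N - 1) * (sylvester N - 2)
      = 2 * sylvester m * ((∏ i ∈ (Ico 1 N).erase m, sylvester i)
          * (2 * ∏ i ∈ Ico 1 N, sylvester i - 1)) := by
  have hN : 1 ≤ N := by rw [mem_Ico] at hm; omega
  rw [sylvester_eq_two_mul_prod_add_one hN, Nat.add_sub_cancel, Nat.add_sub_add_right _ 1 1,
    ← prod_erase_mul _ _ hm]
  ring

theorem sylvester_mul_sub_one_mul_sub_two_div {N m : ℕ} (hm : m ∈ Ico 1 N) :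
    sylvester m * ((sylvester N - 1) * (sylvester N - 2) / (2 * sylvester m))
      = (sylvester N - 1) * (sylvester N - 2) / 2 := by
  rw [sylvester_sub_one_mul_sub_two_eq hm, Nat.mul_div_cancel_left _
    (Nat.mul_pos two_pos (sylvester_pos m)), Nat.mul_assoc, Nat.mul_div_cancel_left _ two_pos]

theorem sum_sylvester_sub_one_mul_sub_two_div {N : ℕ} (hN : 1 ≤ N) :
    ((sylvester N - 1) * (sylvester N - 2) / 2 - 1) / 2 + (sylvester N - 1) / 2
      + ∑ m ∈ Ico 1 N, (sylvester N - 1) * (sylvester N - 2) / (2 * sylvester m)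
      = (sylvester N - 1) * (sylvester N - 2) / 2 := by
  have hmid : ∀ m ∈ Ico 1 N, (sylvester N - 1) * (sylvester N - 2) / (2 * sylvester m)
      = (∏ i ∈ (Ico 1 N).erase m, sylvester i) * (2 * ∏ i ∈ Ico 1 N, sylvester i - 1) :=
    fun m hm => by rw [sylvester_sub_one_mul_sub_two_eq hm, Nat.mul_div_cancel_left _
      (Nat.mul_pos two_pos (sylvester_pos m))]
  rw [sum_congr rfl hmid, ← sum_mul, sylvester_eq_two_mul_prod_add_one hN, Nat.add_sub_cancel,
    Nat.add_sub_add_right _ 1 1, Nat.mul_div_cancel_left _ two_pos, Nat.mul_assoc,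
    Nat.mul_div_cancel_left _ two_pos, ← two_mul_sum_prod_erase_sylvester_add_one hN]
  generalize ∑ m ∈ Ico 1 N, ∏ i ∈ (Ico 1 N).erase m, sylvester i = w
  rw [show 2 * (2 * w + 1) - 1 = 4 * w + 1 by omega,
    show (2 * w + 1) * (4 * w + 1) = 2 * (w * (4 * w + 3)) + 1 by ring,
    Nat.add_sub_cancel, Nat.mul_div_cancel_left _ two_pos]
  ring

theorem coprime_sylvester_sub_one_div_two_sub_one {N : ℕ} (hN : 1 ≤ N) :
    Nat.Coprime ((sylvester N - 1) / 2 - 1) ((sylvester N - 1) * (sylvester N - 2) / 2) := by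
  have hQ : 0 < ∏ i ∈ Ico 1 N, sylvester i := prod_pos fun i _ => sylvester_pos i
  rw [sylvester_eq_two_mul_prod_add_one hN, Nat.add_sub_cancel, Nat.mul_div_cancel_left _ two_pos,
    Nat.mul_assoc, Nat.mul_div_cancel_left _ two_pos, Nat.add_sub_add_right _ 1 1]
  exact coprime_sub_one_mul_two_mul_sub_one hQ

theorem terminal_weights_aj_relation_general (n : ℕ)
    (a : ℕ → ℕ)
    (ha0 : a 0 = (sylvester (n - 1) - 1) / 2 - 1)
    (ha1 : a 1 = (sylvester (n - 1) - 1) / 2)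
    (hai : ∀ i, 2 ≤ i → i ≤ n - 1 →
      a i = (sylvester (n - 1) - 1) * (sylvester (n - 1) - 2) / (2 * sylvester (n - i)))
    (han : a n = ((sylvester (n - 1) - 1) * (sylvester (n - 1) - 2) / 2 - 1) / 2) :
    ∀ j, 2 ≤ j → j ≤ n - 1 →
      a n + a 1 + (∑ i ∈ (Finset.Icc 2 (n - 1)).erase j, a i)
        = (sylvester (n - j) - 1) * a j
      ∧ Nat.Coprime (a 0) (a j) := by
  intro j hj2 hjn
  have hj : j ∈ Icc 2 (n - 1) := mem_Icc.2 ⟨hj2, hjn⟩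
  have hm : n - j ∈ Ico 1 (n - 1) := by rw [mem_Ico]; omega
  have htotal : a n + a 1 + ∑ i ∈ Icc 2 (n - 1), a i
      = (sylvester (n - 1) - 1) * (sylvester (n - 1) - 2) / 2 := by
    rw [sum_congr rfl fun i hi => hai i (mem_Icc.1 hi).1 (mem_Icc.1 hi).2,
      sum_Icc_two_sub_one_reflect (fun m =>
        (sylvester (n - 1) - 1) * (sylvester (n - 1) - 2) / (2 * sylvester m)) (by omega),
      han, ha1]
    exact sum_sylvester_sub_one_mul_sub_two_div (by omega)
  have haj : sylvester (n - j) * a j = (sylvester (n - 1) - 1) * (sylvester (n - 1) - 2) / 2 := by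
    rw [hai j hj2 hjn]
    exact sylvester_mul_sub_one_mul_sub_two_div hm
  constructor
  · rw [← add_sum_erase _ _ hj] at htotal
    rw [Nat.sub_one_mul]
    omega
  · rw [ha0]
    exact (coprime_sylvester_sub_one_div_two_sub_one (by omega)).coprime_dvd_right
      (Dvd.intro_left _ haj)

theorem terminal_weights_aj_relation (n : ℕ) (hn : 3 ≤ n)
    (a : ℕ → ℕ)
    (ha0 : a 0 = (sylvester (n - 1) - 1) / 2 - 1)
    (ha1 : a 1 = (sylvester (n - 1) - 1) / 2)
    (hai : ∀ i, 2 ≤ i → i ≤ n - 1 →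
      a i = (sylvester (n - 1) - 1) * (sylvester (n - 1) - 2) / (2 * sylvester (n - i)))
    (han : a n = ((sylvester (n - 1) - 1) * (sylvester (n - 1) - 2) / 2 - 1) / 2) :
    ∀ j, 2 ≤ j → j ≤ n - 1 →
      a n + a 1 + (∑ i ∈ (Finset.Icc 2 (n - 1)).erase j, a i)
        = (sylvester (n - j) - 1) * a j
      ∧ Nat.Coprime (a 0) (a j) :=
  terminal_weights_aj_relation_general n a ha0 ha1 hai han
end

section
/- For n ≥ 3 and the terminal construction weights, gcd(a_1, a_n) = 1, where a_1 = (s_{n-1}-1)/2 and a_n = ((s_{n-1}-1)(s_{n-1}-2)/2 - 1)/2. -/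
lemma sylvester_succ_mod_four (m : ℕ) : sylvester (m + 1) % 4 = 3 := by
  induction m with
  | zero => rfl
  | succ k ih =>
    obtain ⟨q, hq⟩ : ∃ q, sylvester (k + 1) = 4 * q + 3 := ⟨sylvester (k + 1) / 4, by omega⟩
    have hpred : 4 * q + 3 - 1 = 4 * q + 2 := by omega
    have hstep : (4 * q + 3) * (4 * q + 2) + 1 = 4 * (4 * q ^ 2 + 5 * q + 1) + 3 := by ring
    rw [sylvester, hq, hpred, hstep]
    omega

lemma Nat.odd_mul_two_mul_sub_one_sub_one_div_two {m : ℕ} (hm : Odd m) :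
    (m * (2 * m - 1) - 1) / 2 = (m - 1) / 2 * (2 * m + 1) := by
  obtain ⟨k, rfl⟩ := hm
  have hfactor : (2 * k + 1) * (4 * k + 1) = 2 * (k * (2 * (2 * k + 1) + 1)) + 1 := by ring
  rw [show 2 * (2 * k + 1) - 1 = 4 * k + 1 by omega, hfactor, Nat.add_sub_cancel,
    Nat.mul_div_cancel_left _ two_pos, show (2 * k + 1 - 1) / 2 = k by omega]

lemma Nat.coprime_self_sub_one_div_two_mul {m : ℕ} (hm : Odd m) :
    Nat.Coprime m ((m - 1) / 2 * (2 * m + 1)) := by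
  obtain ⟨k, rfl⟩ := hm
  rw [show (2 * k + 1 - 1) / 2 = k by omega]
  exact Nat.Coprime.mul_right ((Nat.coprime_mul_right_add_left 1 k 2).mpr (Nat.coprime_one_left k))
    ((Nat.coprime_mul_right_add_right _ 1 2).mpr (Nat.coprime_one_right _))

theorem terminal_weights_a1_an_coprime (n : ℕ) (hn : 3 ≤ n) :
    Nat.gcd ((sylvester (n - 1) - 1) / 2)
      (((sylvester (n - 1) - 1) * (sylvester (n - 1) - 2) / 2 - 1) / 2) = 1 := by
  have hs : sylvester (n - 1) % 4 = 3 := by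
    simpa [show n - 2 + 1 = n - 1 by omega] using sylvester_succ_mod_four (n - 2)
  set m := (sylvester (n - 1) - 1) / 2
  have hsm : sylvester (n - 1) = 2 * m + 1 := by omega
  have hodd : Odd m := Nat.odd_iff.mpr (by omega)
  rw [hsm, show 2 * m + 1 - 1 = 2 * m by omega, show 2 * m + 1 - 2 = 2 * m - 1 by omega, mul_assoc,
    Nat.mul_div_cancel_left _ two_pos, Nat.odd_mul_two_mul_sub_one_sub_one_div_two hodd]
  exact Nat.coprime_self_sub_one_div_two_mul hodd
end

section
/- For odd n = 2k+1 with k ≥ 2 and the weights of the large-volume construction (a_0=a_1=a_2=1, a_{2i-1}=h/(2s_{k+1-i}), a_{2i}=h/s_{k+1-i} for 2 ≤ i ≤ k-1, a_{n-2}=h/6, a_{n-1}=h/4, a_n=h/3, h = 2(s_k - 1)), the quotient h^n / (a_0 a_1 ⋯ a_n) equals 2^{(n+1)/2} (s_{(n-1)/2} - 1)^4. -/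
open Finset

theorem Finset.prod_range_two_mul_add_one {M : Type*} [CommMonoid M] (f : ℕ → M) (m : ℕ) :
    ∏ j ∈ range (2 * m + 1), f j
      = f 0 * ∏ i ∈ range m, (f (2 * i + 1) * f (2 * i + 2)) := by
  induction m with
  | zero => simp
  | succ m ih =>
    rw [show 2 * (m + 1) + 1 = 2 * m + 1 + 1 + 1 by ring, prod_range_succ, prod_range_succ, ih,
      prod_range_succ, mul_assoc, mul_assoc]

theorem sylvester_sub_one_eq_prod (n : ℕ) : sylvester n - 1 = ∏ j ∈ range n, sylvester j := by
  induction n with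
  | zero => rfl
  | succ n ih => rw [prod_range_succ, ← ih, sylvester, Nat.add_sub_cancel, mul_comm]

theorem sylvester_dvd_sylvester_sub_one {j k : ℕ} (hjk : j < k) :
    sylvester j ∣ sylvester k - 1 := by
  rw [sylvester_sub_one_eq_prod]
  exact dvd_prod_of_mem _ (mem_range.2 hjk)

theorem sylvester_add_two_sub_one (m : ℕ) :
    sylvester (m + 2) - 1 = 6 * ∏ i ∈ range m, sylvester (m + 1 - i) := by
  rw [sylvester_sub_one_eq_prod, add_comm, prod_range_add, ← prod_range_reflect _ m]
  refine congrArg₂ _ rfl (prod_congr rfl fun i hi => ?_)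
  have := mem_range.1 hi
  congr 1
  omega

theorem Nat.div_two_mul_mul_div_mul {h d : ℕ} (hd : 2 * d ∣ h) :
    h / (2 * d) * (h / d) * (2 * d ^ 2) = h ^ 2 := by
  calc h / (2 * d) * (h / d) * (2 * d ^ 2) = (h / (2 * d) * (2 * d)) * (h / d * d) := by ring
    _ = h ^ 2 := by
      rw [Nat.div_mul_cancel hd, Nat.div_mul_cancel (dvd_trans (dvd_mul_left d 2) hd), sq]

theorem Nat.div_six_mul_div_four_mul_div_three {h : ℕ} (h12 : 12 ∣ h) :
    h / 6 * (h / 4) * (h / 3) * 72 = h ^ 3 := by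
  obtain ⟨c, rfl⟩ := h12
  rw [show 12 * c / 6 = 2 * c by omega, show 12 * c / 4 = 3 * c by omega,
    show 12 * c / 3 = 4 * c by omega]
  ring

theorem prod_range_two_mul_add_six {M : Type*} [CommMonoid M] (a : ℕ → M)
    (ha012 : ∀ j ≤ 2, a j = 1) (m : ℕ) :
    ∏ j ∈ range (2 * m + 6), a j
      = (∏ i ∈ range m, a (2 * i + 3) * a (2 * i + 4))
        * (a (2 * m + 3) * a (2 * m + 4) * a (2 * m + 5)) := by
  rw [prod_range_succ, show 2 * m + 5 = 2 * (m + 2) + 1 by ring, prod_range_two_mul_add_one,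
    prod_range_succ, prod_range_succ', ha012 0 (by norm_num), ha012 1 (by norm_num),
    ha012 2 le_rfl]
  simp only [mul_add_one, add_assoc, Nat.reduceAdd, one_mul, mul_one]
  rw [mul_assoc, show 2 * (m + 2) + 1 = 2 * m + 5 by ring]

theorem prod_large_volume_weights_mul (k : ℕ) (hk : 2 ≤ k) (h : ℕ)
    (hh : h = 2 * (sylvester k - 1)) (a : ℕ → ℕ) (ha012 : ∀ j ≤ 2, a j = 1)
    (haodd : ∀ i, 2 ≤ i → i ≤ k - 1 → a (2 * i - 1) = h / (2 * sylvester (k + 1 - i)))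
    (haeven : ∀ i, 2 ≤ i → i ≤ k - 1 → a (2 * i) = h / sylvester (k + 1 - i))
    (han2 : a (2 * k - 1) = h / 6) (han1 : a (2 * k) = h / 4) (han : a (2 * k + 1) = h / 3) :
    (∏ j ∈ range (2 * k + 2), a j) * (2 ^ (k + 1) * (sylvester k - 1) ^ 4)
      = h ^ (2 * k + 1) := by
  obtain ⟨m, rfl⟩ : ∃ m, k = m + 2 := ⟨k - 2, by omega⟩
  set Q := ∏ i ∈ range m, sylvester (m + 1 - i)
  have hS : sylvester (m + 2) - 1 = 6 * Q := sylvester_add_two_sub_one m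
  have hpair : ∀ i ∈ range m,
      a (2 * i + 3) * a (2 * i + 4) * (2 * sylvester (m + 1 - i) ^ 2) = h ^ 2 := by
    intro i hi
    rw [mem_range] at hi
    have hd : 2 * sylvester (m + 1 - i) ∣ h :=
      hh ▸ mul_dvd_mul_left 2 (sylvester_dvd_sylvester_sub_one (by omega))
    have ho := haodd (i + 2) (by omega) (by omega)
    have he := haeven (i + 2) (by omega) (by omega)
    rw [show 2 * (i + 2) - 1 = 2 * i + 3 by omega,
      show m + 2 + 1 - (i + 2) = m + 1 - i by omega] at ho
    rw [show 2 * (i + 2) = 2 * i + 4 by ring,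
      show m + 2 + 1 - (i + 2) = m + 1 - i by omega] at he
    rw [ho, he, Nat.div_two_mul_mul_div_mul hd]
  have hmiddle :
      (∏ i ∈ range m, a (2 * i + 3) * a (2 * i + 4)) * (2 ^ m * Q ^ 2) = h ^ (2 * m) := by
    have hden : ∏ i ∈ range m, 2 * sylvester (m + 1 - i) ^ 2 = 2 ^ m * Q ^ 2 := by
      rw [prod_mul_distrib, prod_const, card_range, prod_pow]
    rw [← hden, ← prod_mul_distrib, prod_eq_pow_card hpair, card_range, pow_mul]
  have hlast : a (2 * m + 3) * a (2 * m + 4) * a (2 * m + 5) * 72 = h ^ 3 := by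
    rw [show 2 * m + 3 = 2 * (m + 2) - 1 by omega, han2, show 2 * m + 4 = 2 * (m + 2) by ring,
      han1, show 2 * m + 5 = 2 * (m + 2) + 1 by ring, han]
    exact Nat.div_six_mul_div_four_mul_div_three ⟨Q, by rw [hh, hS]; ring⟩
  calc (∏ j ∈ range (2 * (m + 2) + 2), a j) * (2 ^ (m + 2 + 1) * (sylvester (m + 2) - 1) ^ 4)
      = ((∏ i ∈ range m, a (2 * i + 3) * a (2 * i + 4)) * (2 ^ m * Q ^ 2))
          * (a (2 * m + 3) * a (2 * m + 4) * a (2 * m + 5) * 72)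
          * (2 * (sylvester (m + 2) - 1)) ^ 2 := by
        rw [show 2 * (m + 2) + 2 = 2 * m + 6 by ring, prod_range_two_mul_add_six a ha012, hS]
        ring
    _ = h ^ (2 * (m + 2) + 1) := by rw [hmiddle, hlast, ← hh]; ring

theorem large_volume_value (k : ℕ) (hk : 2 ≤ k)
    (n : ℕ) (hn : n = 2 * k + 1)
    (h : ℕ) (hh : h = 2 * (sylvester k - 1))
    (a : ℕ → ℕ)
    (ha012 : ∀ j ≤ 2, a j = 1)
    (haodd : ∀ i, 2 ≤ i → i ≤ k - 1 → a (2 * i - 1) = h / (2 * sylvester (k + 1 - i)))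
    (haeven : ∀ i, 2 ≤ i → i ≤ k - 1 → a (2 * i) = h / sylvester (k + 1 - i))
    (han2 : a (n - 2) = h / 6)
    (han1 : a (n - 1) = h / 4)
    (han : a n = h / 3) :
    h ^ n / (∏ j ∈ Finset.range (n + 1), a j)
      = 2 ^ ((n + 1) / 2) * (sylvester ((n - 1) / 2) - 1) ^ 4 := by
  subst hn
  rw [show 2 * k + 1 - 2 = 2 * k - 1 by omega] at han2
  rw [show 2 * k + 1 - 1 = 2 * k by omega] at han1
  have hprod := prod_large_volume_weights_mul k hk h hh a ha012 haodd haeven han2 han1 han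
  have hpos : 0 < h := by have := two_le_sylvester k; omega
  have hprod_pos : 0 < ∏ j ∈ range (2 * k + 1 + 1), a j :=
    Nat.pos_of_ne_zero fun h0 => (pow_pos hpos _).ne' (by rw [← hprod, h0, zero_mul])
  rw [Nat.div_eq_of_eq_mul_right hprod_pos hprod.symm, show (2 * k + 1 + 1) / 2 = k + 1 by omega,
    show (2 * k + 1 - 1) / 2 = k by omega]
end
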